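/- arXiv:1106.5677 — 2 statements merged into one kernel-verified Lean document; each statement's English description precedes it below -/
import Mathlib

section
/- Let k, c, d be natural numbers and let χ₁, …, χ_d be nonzero elements of ℤ^k. In the polynomial ring R = ℂ[y₁,…,y_c, x₁,…,x_d, z₁,…,z_d], assign each variable y_j the weight 0 ∈ ℤ^k, each x_i the weight χ_i, and each z_i the weight −χ_i, and define the weight of a monomial to be the sum, with multiplicity, of the weights of its variables. Let A ⊆ R be the ℂ-subalgebra spanned by all monomials of weight 0. Then the Krull dimension of A is at least c + d. -/
open MvPolynomial

noncomputable section

/-- The variables of the polynomial ring `R = ℂ[y₁,…,y_c, x₁,…,x_d, z₁,…,z_d]`: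
`Sum.inl j` is `y_j`, `Sum.inr (Sum.inl i)` is `x_i`, `Sum.inr (Sum.inr i)` is `z_i`. -/
abbrev SymVar (c d : ℕ) : Type := Fin c ⊕ (Fin d ⊕ Fin d)

/-- The `ℤ^k`-weight of each variable: `y_j` has weight `0`, `x_i` has weight `χ i`,
`z_i` has weight `-χ i`. -/
def varWeight (k c d : ℕ) (χ : Fin d → Fin k → ℤ) : SymVar c d → Fin k → ℤ :=
  Sum.elim (fun _ => 0) (Sum.elim (fun i => χ i) (fun i => -χ i))

/-- The weight of a monomial with exponent vector `e`: the sum, with multiplicity, of the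
weights of its variables. -/
def monWeight (k c d : ℕ) (χ : Fin d → Fin k → ℤ) (e : SymVar c d →₀ ℕ) : Fin k → ℤ :=
  e.sum fun v n => n • varWeight k c d χ v

/-!
Setting `z_i = 1` maps the weight-zero subalgebra `A` onto the polynomial ring
`ℂ[y₁,…,y_c, t₁,…,t_d]`: the invariants `y_j` and `x_i z_i` go to the variables `y_j` and
`t_i`. Krull dimension can only drop along a surjection, and that polynomial ring has
dimension `c + d`.
-/

theorem natCard_le_ringKrullDim_of_surjective {K A σ : Type*} [Field K] [CommRing A] [Finite σ]
    (f : A →+* MvPolynomial σ K) (hf : Function.Surjective f) :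
    (Nat.card σ : WithBot ℕ∞) ≤ ringKrullDim A := by
  calc (Nat.card σ : WithBot ℕ∞)
      = ringKrullDim K + Nat.card σ := by rw [ringKrullDim_eq_zero_of_field, zero_add]
    _ ≤ ringKrullDim (MvPolynomial σ K) :=
      ringKrullDim_add_natCard_le_ringKrullDim_mvPolynomial σ
    _ ≤ ringKrullDim A := ringKrullDim_le_of_surjective f hf

theorem MvPolynomial.algHom_surjective_of_forall_X_mem_range {R A σ : Type*} [CommSemiring R]
    [Semiring A] [Algebra R A] (f : A →ₐ[R] MvPolynomial σ R) (hf : ∀ v, X v ∈ f.range) :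
    Function.Surjective f := by
  rw [← AlgHom.range_eq_top, eq_top_iff, ← adjoin_range_X, Algebra.adjoin_le_iff]
  rintro _ ⟨v, rfl⟩
  exact hf v

section WeightZero

variable (k c d : ℕ) (χ : Fin d → Fin k → ℤ)

theorem monWeight_add (e f : SymVar c d →₀ ℕ) :
    monWeight k c d χ (e + f) = monWeight k c d χ e + monWeight k c d χ f :=
  Finsupp.sum_add_index' (fun _ => zero_smul ℕ _) (fun _ _ _ => add_smul _ _ _)

theorem monWeight_single_one (v : SymVar c d) :
    monWeight k c d χ (Finsupp.single v 1) = varWeight k c d χ v :=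
  (Finsupp.sum_single_index (h := fun v n => n • varWeight k c d χ v) (zero_smul ℕ _)).trans
    (one_smul ℕ _)

def weightZeroSubalgebra (R : Type*) [CommSemiring R] :
    Subalgebra R (MvPolynomial (SymVar c d) R) :=
  Algebra.adjoin R
    {p | ∃ e : SymVar c d →₀ ℕ, p = monomial e 1 ∧ monWeight k c d χ e = 0}

variable (R : Type*) [CommSemiring R]

theorem X_inl_mem_weightZeroSubalgebra (j : Fin c) :
    (X (Sum.inl j) : MvPolynomial (SymVar c d) R) ∈ weightZeroSubalgebra k c d χ R :=
  Algebra.subset_adjoin ⟨Finsupp.single (Sum.inl j) 1, rfl, by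
    rw [monWeight_single_one]; rfl⟩

theorem X_mul_X_mem_weightZeroSubalgebra (i : Fin d) :
    (X (Sum.inr (Sum.inl i)) * X (Sum.inr (Sum.inr i)) : MvPolynomial (SymVar c d) R) ∈
      weightZeroSubalgebra k c d χ R :=
  Algebra.subset_adjoin
    ⟨Finsupp.single (Sum.inr (Sum.inl i)) 1 + Finsupp.single (Sum.inr (Sum.inr i)) 1,
      by rw [X, X, monomial_mul, one_mul],
      by rw [monWeight_add, monWeight_single_one, monWeight_single_one]
         exact add_neg_cancel (χ i)⟩

def substZOne : MvPolynomial (SymVar c d) R →ₐ[R] MvPolynomial (Fin c ⊕ Fin d) R :=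
  aeval (Sum.elim (fun j => X (Sum.inl j)) (Sum.elim (fun i => X (Sum.inr i)) 1))

theorem substZOne_restrict_surjective :
    Function.Surjective ((substZOne c d R).comp (weightZeroSubalgebra k c d χ R).val) := by
  refine MvPolynomial.algHom_surjective_of_forall_X_mem_range _ ?_
  rintro (j | i)
  · exact ⟨⟨_, X_inl_mem_weightZeroSubalgebra k c d χ R j⟩, by simp [substZOne]⟩
  · exact ⟨⟨_, X_mul_X_mem_weightZeroSubalgebra k c d χ R i⟩, by simp [substZOne]⟩

end WeightZero

theorem krullDim_invariant_subalgebra_ge_general (k c d : ℕ) (χ : Fin d → Fin k → ℤ) :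
    ((c + d : ℕ) : WithBot ℕ∞) ≤
      ringKrullDim (Algebra.adjoin ℂ
        {p : MvPolynomial (SymVar c d) ℂ | ∃ e : SymVar c d →₀ ℕ,
          p = monomial e 1 ∧ monWeight k c d χ e = 0}) := by
  have h := natCard_le_ringKrullDim_of_surjective _
    (substZOne_restrict_surjective k c d χ ℂ)
  rwa [Nat.card_sum, Nat.card_fin, Nat.card_fin] at h

/-- If `χ₁, …, χ_d ∈ ℤ^k` are nonzero, then the ℂ-subalgebra of
`R = ℂ[y₁,…,y_c, x₁,…,x_d, z₁,…,z_d]` spanned by the monomials of weight `0`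
(where `y_j` has weight `0`, `x_i` has weight `χ_i` and `z_i` has weight `-χ_i`)
has Krull dimension at least `c + d`. -/
theorem krullDim_invariant_subalgebra_ge (k c d : ℕ) (χ : Fin d → Fin k → ℤ)
    (hχ : ∀ i, χ i ≠ 0) :
    ((c + d : ℕ) : WithBot ℕ∞) ≤
      ringKrullDim (Algebra.adjoin ℂ
        {p : MvPolynomial (SymVar c d) ℂ | ∃ e : SymVar c d →₀ ℕ,
          p = monomial e 1 ∧ monWeight k c d χ e = 0}) :=
  krullDim_invariant_subalgebra_ge_general k c d χ
end
end

section
/- Let l be a natural number and let Λ ⊆ ℕ^l be an additive submonoid that is freely generated by elements μ₁, …, μ_r (that is, every element of Λ has a unique representation as an ℕ-linear combination of μ₁, …, μ_r). Suppose there exist nonzero elements λ₁, …, λ_m ∈ Λ with pairwise disjoint supports such that every element of Λ is a ℚ-linear combination of λ₁, …, λ_m with nonnegative rational coefficients. Then the supports of μ₁, …, μ_r are pairwise disjoint; in particular, Λ is generated by elements with pairwise disjoint supports. -/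
/-!
Write `λ_k = ∑_j n_kj μ_j` with `n_kj ∈ ℕ` and `μ_i = ∑_k q_ik λ_k` with `q_ik ≥ 0`. Uniqueness of
`ℕ`-representations makes the `μ`'s linearly independent over `ℚ`, so comparing coefficients
gives `∑_k q_ik n_kj = δ_ij`. All terms being nonnegative, every `λ_k` with `q_ik ≠ 0` is a
multiple of `μ_i` alone. A coordinate in the supports of `μ_i` and `μ_j` lies in the support of
such a `λ_k` for `μ_i` and of such a `λ_k'` for `μ_j`; disjointness of the `λ`'s forces `k = k'`,
so the nonzero `λ_k` is a multiple of both `μ_i` and `μ_j`, which freeness rules out for `i ≠ j`.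
-/

open Finset Function

section NatCastVec

variable {κ : Type*}

def natCastVec (κ : Type*) : (κ → ℕ) →+ (κ → ℚ) := (Nat.castAddMonoidHom ℚ).compLeft κ

@[simp] lemma natCastVec_apply (x : κ → ℕ) (t : κ) : natCastVec κ x t = x t := rfl

lemma natCastVec_injective : Injective (natCastVec κ) :=
  fun _ _ h => funext fun t => by simpa using congrFun h t

lemma LinearIndependent.natCastVec {ι : Type*} {μ : ι → κ → ℕ} (hμ : LinearIndependent ℕ μ) :
    LinearIndependent ℚ (natCastVec κ ∘ μ) := by
  rw [← LinearIndependent.iff_fractionRing ℤ ℚ, linearIndependent_iff'']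
  intro s g hg hsum i
  by_cases hi : i ∈ s
  · have hpos_neg : ∑ j ∈ s, (g j).toNat • μ j = ∑ j ∈ s, (-g j).toNat • μ j := by
      refine natCastVec_injective ?_
      simp only [map_sum, map_nsmul]
      rw [← sub_eq_zero, ← sum_sub_distrib, ← hsum]
      refine sum_congr rfl fun j _ => ?_
      conv_rhs => rw [← (g j).toNat_sub_toNat_neg]
      simp only [sub_smul, natCast_zsmul, comp_apply]
    have hgi := linearIndependent_iff'ₛ.mp hμ s _ _ hpos_neg i hi
    rw [← (g i).toNat_sub_toNat_neg, hgi, sub_self]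
  · exact hg i hi

lemma natCastVec_sum_nsmul {ι : Type*} (s : Finset ι) (c : ι → ℕ) (x : ι → κ → ℕ) :
    natCastVec κ (∑ i ∈ s, c i • x i) = ∑ i ∈ s, (c i : ℚ) • natCastVec κ (x i) := by
  simp only [map_sum, map_nsmul, Nat.cast_smul_eq_nsmul]

end NatCastVec

section Cone

variable {K V ι κ : Type*} [Semiring K] [PartialOrder K] [IsOrderedRing K] [NoZeroDivisors K]
  [AddCommMonoid V] [Module K V] [Fintype ι] [Fintype κ] [DecidableEq ι]

theorem LinearIndependent.eq_smul_of_coeff_ne_zero {v : ι → V} (hv : LinearIndependent K v)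
    {w : κ → V} {n : κ → ι → K} (hn : ∀ k j, 0 ≤ n k j) (hw : ∀ k, w k = ∑ j, n k j • v j)
    {i : ι} {q : κ → K} (hq : ∀ k, 0 ≤ q k) (hvi : v i = ∑ k, q k • w k)
    {k : κ} (hqk : q k ≠ 0) : w k = n k i • v i := by
  have hcoeff : ∀ j, ∑ k, q k * n k j = (Pi.single i 1 : ι → K) j := by
    refine Fintype.linearIndependent_iffₛ.mp hv _ _ ?_
    calc ∑ j, (∑ k, q k * n k j) • v j = ∑ k, q k • w k := by
          simp only [hw, smul_sum, sum_smul, mul_smul]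
          exact sum_comm
      _ = ∑ j, (Pi.single i 1 : ι → K) j • v j := by
          rw [← hvi, Fintype.sum_eq_single i fun j hj => by rw [Pi.single_eq_of_ne hj, zero_smul],
            Pi.single_eq_same, one_smul]
  have hnk : ∀ j ≠ i, n k j = 0 := fun j hj =>
    have hsum : ∑ k, q k * n k j = 0 := by rw [hcoeff j, Pi.single_eq_of_ne hj]
    (mul_eq_zero.mp ((sum_eq_zero_iff_of_nonneg fun k _ => mul_nonneg (hq k) (hn k j)).mp hsum
      k (mem_univ k))).resolve_left hqk
  rw [hw k, Fintype.sum_eq_single i fun j hj => by rw [hnk j hj, zero_smul]]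

end Cone

lemma exists_coeff_ne_zero_of_sum_smul_apply_ne_zero {ι κ R : Type*}
    [NonUnitalNonAssocSemiring R] {s : Finset ι} {q : ι → R} {f : ι → κ → R} {t : κ}
    (h : (∑ i ∈ s, q i • f i) t ≠ 0) : ∃ i ∈ s, q i ≠ 0 ∧ f i t ≠ 0 := by
  rw [Finset.sum_apply] at h
  obtain ⟨i, hi, hqf⟩ := exists_ne_zero_of_sum_ne_zero h
  exact ⟨i, hi, left_ne_zero_of_mul hqf, right_ne_zero_of_mul hqf⟩

section FreeGenerators

variable {M ι : Type*} [AddCommMonoid M] [Fintype ι] {Λ : AddSubmonoid M} {μ : ι → M}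

theorem AddSubmonoid.linearIndependent_of_existsUnique (hμΛ : ∀ i, μ i ∈ Λ)
    (hfree : ∀ x ∈ Λ, ∃! k : ι → ℕ, x = ∑ i, k i • μ i) : LinearIndependent ℕ μ := by
  refine Fintype.linearIndependent_iffₛ.mpr fun f g hfg => congrFun ?_
  obtain ⟨k, -, hk⟩ := hfree (∑ i, f i • μ i) (Λ.sum_mem fun i _ => Λ.nsmul_mem (hμΛ i) _)
  exact (hk f rfl).trans (hk g hfg).symm

theorem AddSubmonoid.eq_closure_range_of_forall_exists (hμΛ : ∀ i, μ i ∈ Λ)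
    (hspan : ∀ x ∈ Λ, ∃ k : ι → ℕ, x = ∑ i, k i • μ i) : Λ = closure (Set.range μ) := by
  refine le_antisymm (fun x hx => ?_) (closure_le.mpr (Set.range_subset_iff.mpr hμΛ))
  obtain ⟨k, rfl⟩ := hspan x hx
  exact sum_mem _ fun i _ => nsmul_mem (subset_closure (Set.mem_range_self i)) _

end FreeGenerators

/-- Let `Λ ⊆ ℕ^l` be an additive submonoid freely generated by `μ₁, …, μ_r` (every element
of `Λ` has a unique representation as an `ℕ`-linear combination of the `μ`'s).  Suppose
there are nonzero `λ₁, …, λ_m ∈ Λ` with pairwise disjoint supports such that every element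
of `Λ` is a `ℚ`-linear combination of the `λ`'s with nonnegative rational coefficients.
Then the supports of `μ₁, …, μ_r` are pairwise disjoint; in particular, `Λ` is generated
by elements with pairwise disjoint supports. -/
theorem free_generators_have_disjoint_supports (l r m : ℕ)
    (Λ : AddSubmonoid (Fin l → ℕ)) (μ : Fin r → Fin l → ℕ)
    (hμΛ : ∀ i, μ i ∈ Λ)
    (hfree : ∀ x ∈ Λ, ∃! k : Fin r → ℕ, x = ∑ i, k i • μ i)
    (lam : Fin m → Fin l → ℕ)
    (hlamΛ : ∀ i, lam i ∈ Λ)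
    (hlamne : ∀ i, lam i ≠ 0)
    (hlamdisj : ∀ i j, i ≠ j → Disjoint {t | lam i t ≠ 0} {t | lam j t ≠ 0})
    (hcone : ∀ x ∈ Λ, ∃ q : Fin m → ℚ, (∀ i, 0 ≤ q i) ∧
      (fun t => (x t : ℚ)) = ∑ i, q i • fun t => (lam i t : ℚ)) :
    (∀ i j, i ≠ j → Disjoint {t | μ i t ≠ 0} {t | μ j t ≠ 0}) ∧
    Λ = AddSubmonoid.closure (Set.range μ) := by
  have hμ : LinearIndependent ℕ μ := Λ.linearIndependent_of_existsUnique hμΛ hfree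
  refine ⟨fun i j hij => ?_,
    Λ.eq_closure_range_of_forall_exists hμΛ fun x hx => (hfree x hx).exists⟩
  choose n hn using fun k => (hfree (lam k) (hlamΛ k)).exists
  choose q hq hμq using fun i => hcone (μ i) (hμΛ i)
  have hmultiple : ∀ i k, q i k ≠ 0 → lam k = n k i • μ i := fun i k hqk =>
    natCastVec_injective <| by
      have hcast := hμ.natCastVec.eq_smul_of_coeff_ne_zero (w := natCastVec _ ∘ lam)
        (n := fun k j => (n k j : ℚ)) (fun _ _ => Nat.cast_nonneg _)
        (fun k => by rw [comp_apply, hn k, natCastVec_sum_nsmul]; rfl) (hq i) (hμq i) hqk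
      rwa [map_nsmul, ← Nat.cast_smul_eq_nsmul ℚ]
  have hcover : ∀ i t, μ i t ≠ 0 → ∃ k, q i k ≠ 0 ∧ lam k t ≠ 0 := fun i t hit => by
    obtain ⟨k, -, hqk, hkt⟩ := exists_coeff_ne_zero_of_sum_smul_apply_ne_zero
      (congrFun (hμq i) t ▸ Nat.cast_ne_zero.mpr hit)
    exact ⟨k, hqk, Nat.cast_ne_zero.mp hkt⟩
  rw [Set.disjoint_left]
  rintro t (hi : μ i t ≠ 0) (hj : μ j t ≠ 0)
  obtain ⟨k, hqik, hkt⟩ := hcover i t hi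
  obtain ⟨k', hqjk', hk't⟩ := hcover j t hj
  obtain rfl : k = k' := by_contra fun hkk' => Set.disjoint_left.mp (hlamdisj k k' hkk') hkt hk't
  have hnki : n k i ≠ 0 := fun h => hlamne k (by rw [hmultiple i k hqik, h, zero_smul])
  exact hij (hμ.eq_of_smul_apply_eq_smul_apply _ _ i j hnki
    ((hmultiple i k hqik).symm.trans (hmultiple j k hqjk')))
end
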